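/- Suppose (𝒳, S, γ, (Λ_a)_{a∈A}) is a spectral decomposition system for a Euclidean space 𝔥 with {Λ_a : a ∈ A} closed in L(𝒳,𝔥). Let φ : 𝒳 → (−∞,+∞] be proper and S-invariant, let Ψ : 𝔥 → ℝ be Fréchet differentiable, and let X ∈ 𝔥 be such that γ(X) ∈ dom φ. If X is a local minimizer of φ∘γ + Ψ, then there exist y ∈ ∂_F φ(γ(X)) and a ∈ A_X such that −∇Ψ(X) = Λ_a y. -/

import Mathlib

open Filter Topology Set Metric
open scoped RealInnerProductSpace

noncomputable section

/-- A spectral decomposition system `(𝒳, S, γ, (Λ_a)_{a ∈ A})` for the space `H`: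
`S` acts on `𝒳` by linear isometries (via `act`), `γ : H → 𝒳` is the spectral
mapping, each `Λ a : 𝒳 → H` is a linear isometry, and the axioms [A], [B], [C] hold,
with `τ` the `S`-invariant ordering mapping of axiom [A]. -/
structure SDS (𝒳 H : Type*) [NormedAddCommGroup 𝒳] [InnerProductSpace ℝ 𝒳]
    [NormedAddCommGroup H] [InnerProductSpace ℝ H]
    (S : Type*) [Group S] (A : Type*) where
  act : S →* (𝒳 ≃ₗᵢ[ℝ] 𝒳)
  γ : H → 𝒳
  Λ : A → 𝒳 →ₗᵢ[ℝ] H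
  τ : 𝒳 → 𝒳
  τ_inv : ∀ (s : S) (x : 𝒳), τ (act s x) = τ x
  τ_orbit : ∀ x : 𝒳, ∃ s : S, τ x = act s x
  γΛ : ∀ (a : A) (x : 𝒳), γ (Λ a x) = τ x
  decomp : ∀ X : H, ∃ a : A, X = Λ a (γ X)
  inner_le : ∀ X Y : H, ⟪X, Y⟫ ≤ ⟪γ X, γ Y⟫

variable {𝒳 H S A : Type*} [NormedAddCommGroup 𝒳] [InnerProductSpace ℝ 𝒳]
    [NormedAddCommGroup H] [InnerProductSpace ℝ H] [Group S]

/-- The set `{Λ_a : a ∈ A}`, regarded as a subset of the space `L(𝒳, H)` of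
continuous linear maps with the operator norm. -/
def SDS.LambdaSet (𝔖 : SDS 𝒳 H S A) : Set (𝒳 →L[ℝ] H) :=
  {L | ∃ a : A, L = (𝔖.Λ a).toContinuousLinearMap}

/-- `A_X = {a ∈ A : X = Λ_a (γ X)}`. -/
def SDS.AX (𝔖 : SDS 𝒳 H S A) (X : H) : Set A := {a | X = 𝔖.Λ a (𝔖.γ X)}

/-- The Fréchet subdifferential of an extended-real-valued `f` at `x`: empty unless
`f x` is finite, in which case it is the set of `y` with
`liminf_{z → x, z ≠ x} (f(z) - f(x) - ⟨z - x, y⟩)/‖z - x‖ ≥ 0`, in ε-δ form. -/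
def fSubdiff {E : Type*} [NormedAddCommGroup E] [InnerProductSpace ℝ E]
    (f : E → EReal) (x : E) : Set E :=
  {y | (∃ r : ℝ, f x = (r : EReal)) ∧ ∀ ε : ℝ, 0 < ε → ∃ δ : ℝ, 0 < δ ∧
    ∀ z : E, ‖z - x‖ < δ → f x + ((⟪z - x, y⟫ - ε * ‖z - x‖ : ℝ) : EReal) ≤ f z}

/-!
Write `g = ∇Ψ(X)` and decompose `X - t g = Λ_{c t} γ(X - t g)` for each `t`. The points
`Z t = Λ_{c t} γ(X)` lie in the fibre `γ⁻¹(γ X)`, where `X` minimizes `Ψ` locally, and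
inequality [C] makes `Z t` at least as close to `X - t g` as `X` is; together these force
`‖Z t - X‖ = o(t)` as `t → 0⁺`. Hence `Λ_{c t}` maps the bounded quotients
`(γ(X - t g) - γ X) / t` to points tending to `-g`, and a cluster point `Λ_a` of the `Λ_{c t}`
(the set of all `Λ_b` is compact) satisfies `Λ_a γ X = X` and `-g = Λ_a y`. Finally
`φ ∘ γ ∘ Λ_a = φ` by `S`-invariance, so `γ X` locally minimizes `φ + Ψ ∘ Λ_a`, and Fermat's rule
puts `y` in `∂_F φ(γ X)`.
-/

theorem norm_sub_sq_le_two_inner_of_norm_eq {E : Type*} [NormedAddCommGroup E]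
    [InnerProductSpace ℝ E] {X Z U : E} (hZ : ‖Z‖ = ‖X‖) (h : ⟪X, U⟫ ≤ ⟪Z, U⟫) :
    ‖Z - X‖ ^ 2 ≤ 2 * ⟪Z - X, U - X⟫ := by
  rw [norm_sub_sq_real, hZ, inner_sub_left, inner_sub_right, inner_sub_right,
    real_inner_self_eq_norm_sq, real_inner_comm X Z]
  linarith

theorem HasGradientAt.comp_linearIsometry {E F : Type*} [NormedAddCommGroup E]
    [InnerProductSpace ℝ E] [CompleteSpace E] [NormedAddCommGroup F] [InnerProductSpace ℝ F]
    [CompleteSpace F]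
    {Ψ : F → ℝ} (L : E →ₗᵢ[ℝ] F) {x v : E} (h : HasGradientAt Ψ (L v) (L x)) :
    HasGradientAt (Ψ ∘ L) v x := by
  rw [hasGradientAt_iff_hasFDerivAt] at h ⊢
  refine (h.comp x L.toContinuousLinearMap.hasFDerivAt).congr_fderiv ?_
  ext w
  simp [L.inner_map_map]

theorem neg_mem_fSubdiff_of_eventually_le_add {E : Type*} [NormedAddCommGroup E]
    [InnerProductSpace ℝ E] [CompleteSpace E] {f : E → EReal} {h : E → ℝ} {x v : E} (hfx : f x ≠ ⊤)
    (hfx' : f x ≠ ⊥) (hmin : ∀ᶠ z in 𝓝 x, f x + h x ≤ f z + h z) (hh : HasGradientAt h v x) :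
    -v ∈ fSubdiff f x := by
  obtain ⟨r, hr⟩ : ∃ r : ℝ, f x = r := ⟨(f x).toReal, (EReal.coe_toReal hfx hfx').symm⟩
  rw [hr] at hmin
  refine ⟨⟨r, hr⟩, fun ε hε => ?_⟩
  rw [hr]
  have hlin := (hasGradientAt_iff_isLittleO.1 hh).def hε
  obtain ⟨δ, hδ, hz⟩ := Metric.eventually_nhds_iff.1 (hmin.and hlin)
  refine ⟨δ, hδ, fun z hzx => ?_⟩
  obtain ⟨hminz, hlinz⟩ := hz (by rwa [dist_eq_norm])
  rw [Real.norm_eq_abs, abs_le] at hlinz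
  generalize f z = fz at hminz ⊢
  induction fz using EReal.rec with
  | bot => simp at hminz
  | coe s =>
    norm_cast at hminz ⊢
    rw [inner_neg_right, real_inner_comm]
    linarith
  | top => exact le_top

namespace SDS

variable (𝔖 : SDS 𝒳 H S A)

theorem norm_γ (W : H) : ‖𝔖.γ W‖ = ‖W‖ := by
  obtain ⟨a, ha⟩ := 𝔖.decomp W
  rw [← (𝔖.Λ a).norm_map, ← ha]

theorem τ_γ (W : H) : 𝔖.τ (𝔖.γ W) = 𝔖.γ W := by
  obtain ⟨a, ha⟩ := 𝔖.decomp W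
  conv_rhs => rw [ha, 𝔖.γΛ]

theorem γ_Λ_γ (b : A) (W : H) : 𝔖.γ (𝔖.Λ b (𝔖.γ W)) = 𝔖.γ W := by
  rw [𝔖.γΛ, τ_γ]

theorem apply_γ_Λ {β : Type*} {φ : 𝒳 → β} (hφ : ∀ (s : S) (x : 𝒳), φ (𝔖.act s x) = φ x)
    (b : A) (z : 𝒳) : φ (𝔖.γ (𝔖.Λ b z)) = φ z := by
  obtain ⟨s, hs⟩ := 𝔖.τ_orbit z
  rw [𝔖.γΛ, hs, hφ]

theorem norm_γ_sub_γ_le (U V : H) : ‖𝔖.γ U - 𝔖.γ V‖ ≤ ‖U - V‖ := by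
  have hsq : ‖𝔖.γ U - 𝔖.γ V‖ ^ 2 ≤ ‖U - V‖ ^ 2 := by
    rw [norm_sub_sq_real, norm_sub_sq_real, norm_γ, norm_γ]
    linarith [𝔖.inner_le U V]
  exact (sq_le_sq₀ (norm_nonneg _) (norm_nonneg _)).1 hsq

/-- `Λ_b γ X` has the norm of `X` and is at least as close to `U` as `X` is. -/
theorem norm_Λ_γ_sub_sq_le {b : A} {U : H} (hU : U = 𝔖.Λ b (𝔖.γ U)) (X : H) :
    ‖𝔖.Λ b (𝔖.γ X) - X‖ ^ 2 ≤ 2 * ⟪𝔖.Λ b (𝔖.γ X) - X, U - X⟫ := by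
  refine norm_sub_sq_le_two_inner_of_norm_eq (by rw [LinearIsometry.norm_map, norm_γ]) ?_
  conv_rhs => rw [hU, LinearIsometry.inner_map_map]
  exact 𝔖.inner_le X U

theorem norm_Λ_γ_sub_le {b : A} {U : H} (hU : U = 𝔖.Λ b (𝔖.γ U)) (X : H) :
    ‖𝔖.Λ b (𝔖.γ X) - X‖ ≤ 2 * ‖U - X‖ := by
  have h := (𝔖.norm_Λ_γ_sub_sq_le hU X).trans
    (mul_le_mul_of_nonneg_left (real_inner_le_norm _ _) zero_le_two)
  nlinarith [norm_nonneg (𝔖.Λ b (𝔖.γ X) - X), norm_nonneg (U - X)]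

theorem isCompact_LambdaSet [FiniteDimensional ℝ 𝒳] [FiniteDimensional ℝ H]
    (hcl : IsClosed 𝔖.LambdaSet) : IsCompact 𝔖.LambdaSet := by
  refine (isCompact_closedBall (0 : 𝒳 →L[ℝ] H) 1).of_isClosed_subset hcl ?_
  rintro L ⟨a, rfl⟩
  rw [mem_closedBall, dist_zero_right]
  exact (𝔖.Λ a).norm_toContinuousLinearMap_le

theorem exists_Λ_eq_of_tendsto [FiniteDimensional ℝ 𝒳] [FiniteDimensional ℝ H]
    (hcl : IsClosed 𝔖.LambdaSet) {ι : Type*} {l : Filter ι} [l.NeBot] {b : ι → A}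
    {v : ι → 𝒳} {C : ℝ} (hv : ∀ᶠ i in l, ‖v i‖ ≤ C) {x : 𝒳} {X w : H}
    (hx : Tendsto (fun i => 𝔖.Λ (b i) x) l (𝓝 X))
    (hw : Tendsto (fun i => 𝔖.Λ (b i) (v i)) l (𝓝 w)) :
    ∃ a, 𝔖.Λ a x = X ∧ ∃ y, 𝔖.Λ a y = w := by
  set u : ι → (𝒳 →L[ℝ] H) × 𝒳 := fun i => ((𝔖.Λ (b i)).toContinuousLinearMap, v i)
  have hu : map u l ≤ 𝓟 (𝔖.LambdaSet ×ˢ closedBall 0 C) := by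
    rw [le_principal_iff, mem_map]
    filter_upwards [hv] with i hi
    exact ⟨⟨b i, rfl⟩, by rwa [mem_closedBall, dist_zero_right]⟩
  obtain ⟨⟨L, y⟩, ⟨⟨a, rfl⟩, -⟩, hclu⟩ :=
    ((𝔖.isCompact_LambdaSet hcl).prod (isCompact_closedBall _ _)).exists_mapClusterPt hu
  have he : Continuous fun p : (𝒳 →L[ℝ] H) × 𝒳 => (p.1 x, p.1 p.2) := by fun_prop
  have hlim : ((𝔖.Λ a) x, (𝔖.Λ a) y) = (X, w) :=
    eq_of_nhds_neBot ((hclu.continuousAt_comp he.continuousAt).clusterPt.mono (hx.prodMk_nhds hw))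
  exact ⟨a, congrArg Prod.fst hlim, y, congrArg Prod.snd hlim⟩

variable {𝔖}

theorem tendsto_Λ_γ_of_decomp {c : ℝ → A} {g X : H}
    (hc : ∀ t : ℝ, X - t • g = 𝔖.Λ (c t) (𝔖.γ (X - t • g))) : Tendsto (fun t => 𝔖.Λ (c t) (𝔖.γ X)) (𝓝 0) (𝓝 X) := by
  rw [tendsto_iff_norm_sub_tendsto_zero]
  have h2 : Tendsto (fun t : ℝ => 2 * ‖t • g‖) (𝓝 0) (𝓝 0) := by
    have : Continuous fun t : ℝ => 2 * ‖t • g‖ := by fun_prop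
    simpa using this.tendsto 0
  refine squeeze_zero (fun _ => norm_nonneg _) (fun t => ?_) h2
  simpa using 𝔖.norm_Λ_γ_sub_le (hc t) X

theorem isLittleO_Λ_γ_sub_of_decomp [CompleteSpace H] {c : ℝ → A} {g X : H}
    (hc : ∀ t : ℝ, X - t • g = 𝔖.Λ (c t) (𝔖.γ (X - t • g))) {Ψ : H → ℝ} (hΨ : HasGradientAt Ψ g X)
    (hmin : ∀ᶠ Z in 𝓝 X, 𝔖.γ Z = 𝔖.γ X → Ψ X ≤ Ψ Z) :
    (fun t => 𝔖.Λ (c t) (𝔖.γ X) - X) =o[𝓝[>] 0] fun t => t := by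
  have hZ := (tendsto_Λ_γ_of_decomp hc).mono_left (nhdsWithin_le_nhds (s := Ioi 0))
  refine Asymptotics.isLittleO_iff.2 fun ε hε => ?_
  have hlin := hZ.eventually ((hasGradientAt_iff_isLittleO.1 hΨ).def (half_pos hε))
  filter_upwards [hlin, hZ.eventually hmin, self_mem_nhdsWithin] with t hlin hmin (ht : 0 < t)
  have hsq := 𝔖.norm_Λ_γ_sub_sq_le (hc t) X
  have hmin := hmin (𝔖.γ_Λ_γ _ _)
  set Z := 𝔖.Λ (c t) (𝔖.γ X)
  rw [sub_sub_cancel_left, inner_neg_right, real_inner_smul_right, real_inner_comm] at hsq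
  have hdesc : -⟪g, Z - X⟫ ≤ ε / 2 * ‖Z - X‖ := by
    rw [Real.norm_eq_abs, abs_le] at hlin
    linarith
  rw [Real.norm_eq_abs, abs_of_pos ht]
  nlinarith [norm_nonneg (Z - X), mul_le_mul_of_nonneg_left hdesc ht.le, mul_pos hε ht]

theorem exists_mem_AX_neg_eq_Λ [FiniteDimensional ℝ 𝒳] [FiniteDimensional ℝ H]
    (hcl : IsClosed 𝔖.LambdaSet) {g X : H} {Ψ : H → ℝ} (hΨ : HasGradientAt Ψ g X)
    (hmin : ∀ᶠ Z in 𝓝 X, 𝔖.γ Z = 𝔖.γ X → Ψ X ≤ Ψ Z) :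
    ∃ a ∈ 𝔖.AX X, ∃ y, -g = 𝔖.Λ a y := by
  choose c hc using fun t : ℝ => 𝔖.decomp (X - t • g)
  have hZ := (tendsto_Λ_γ_of_decomp hc).mono_left (nhdsWithin_le_nhds (s := Ioi 0))
  set y : ℝ → 𝒳 := fun t => t⁻¹ • (𝔖.γ (X - t • g) - 𝔖.γ X)
  have hy : ∀ᶠ t in 𝓝[>] 0, ‖y t‖ ≤ ‖g‖ := by
    filter_upwards [self_mem_nhdsWithin] with t (ht : 0 < t)
    have := 𝔖.norm_γ_sub_γ_le (X - t • g) X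
    rw [sub_sub_cancel_left, norm_neg, norm_smul, Real.norm_of_nonneg ht.le] at this
    rw [norm_smul, norm_inv, Real.norm_of_nonneg ht.le]
    exact (inv_mul_le_iff₀ ht).2 this
  -- `Λ_{c t} (y t) = -g - (Z t - X) / t`, and the last term is `o(1)`.
  have hΛy : Tendsto (fun t => 𝔖.Λ (c t) (y t)) (𝓝[>] 0) (𝓝 (-g)) := by
    have h := tendsto_const_nhds (x := -g) |>.sub
      (isLittleO_Λ_γ_sub_of_decomp hc hΨ hmin).tendsto_inv_smul_nhds_zero
    rw [sub_zero] at h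
    refine h.congr' ?_
    filter_upwards [self_mem_nhdsWithin] with t (ht : 0 < t)
    simp only [y, map_smul, map_sub, ← hc t]
    rw [smul_sub, smul_sub, smul_sub, smul_smul, inv_mul_cancel₀ ht.ne', one_smul]
    abel
  obtain ⟨a, ha, y, hy⟩ := 𝔖.exists_Λ_eq_of_tendsto hcl hy hZ hΛy
  exact ⟨a, ha.symm, y, hy.symm⟩

theorem eventually_le_add_comp_Λ {φ : 𝒳 → EReal} (hφ : ∀ (s : S) (x : 𝒳), φ (𝔖.act s x) = φ x)
    {Ψ : H → ℝ} {X : H} {a : A} (ha : a ∈ 𝔖.AX X)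
    (hmin : ∀ᶠ Z in 𝓝 X, φ (𝔖.γ X) + (Ψ X : EReal) ≤ φ (𝔖.γ Z) + (Ψ Z : EReal)) :
    ∀ᶠ z in 𝓝 (𝔖.γ X),
      φ (𝔖.γ X) + ((Ψ ∘ 𝔖.Λ a) (𝔖.γ X) : EReal) ≤ φ z + ((Ψ ∘ 𝔖.Λ a) z : EReal) := by
  have hX : 𝔖.Λ a (𝔖.γ X) = X := ha.symm
  have hcont : Tendsto (𝔖.Λ a) (𝓝 (𝔖.γ X)) (𝓝 X) := by
    simpa only [hX] using (𝔖.Λ a).continuous.tendsto (𝔖.γ X)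
  filter_upwards [hcont.eventually hmin] with z hz
  rw [𝔖.apply_γ_Λ hφ] at hz
  simpa only [Function.comp_apply, hX] using hz

end SDS

theorem commutation_principle_general
    [FiniteDimensional ℝ 𝒳] [FiniteDimensional ℝ H]
    (𝔖 : SDS 𝒳 H S A) (hcl : IsClosed 𝔖.LambdaSet)
    (φ : 𝒳 → EReal) (hφbot : ∀ x : 𝒳, φ x ≠ ⊥)
    (hφ : ∀ (s : S) (x : 𝒳), φ (𝔖.act s x) = φ x)
    (Ψ : H → ℝ) (Ψ' : H → H) (hΨ : ∀ Z : H, HasGradientAt Ψ (Ψ' Z) Z)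
    (X : H) (hdom : φ (𝔖.γ X) ≠ ⊤)
    (hmin : ∃ δ : ℝ, 0 < δ ∧ ∀ Z : H, ‖Z - X‖ < δ →
      φ (𝔖.γ X) + (Ψ X : EReal) ≤ φ (𝔖.γ Z) + (Ψ Z : EReal)) :
    ∃ y ∈ fSubdiff φ (𝔖.γ X), ∃ a ∈ 𝔖.AX X, -Ψ' X = 𝔖.Λ a y := by
  obtain ⟨δ, hδ, hmin⟩ := hmin
  have hmin : ∀ᶠ Z in 𝓝 X, φ (𝔖.γ X) + (Ψ X : EReal) ≤ φ (𝔖.γ Z) + (Ψ Z : EReal) :=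
    Metric.eventually_nhds_iff.2 ⟨δ, hδ, fun Z hZ => hmin Z (by rwa [← dist_eq_norm])⟩
  have hfibre : ∀ᶠ Z in 𝓝 X, 𝔖.γ Z = 𝔖.γ X → Ψ X ≤ Ψ Z := by
    filter_upwards [hmin] with Z hZ hγ
    obtain ⟨r, hr⟩ : ∃ r : ℝ, φ (𝔖.γ X) = r :=
      ⟨_, (EReal.coe_toReal hdom (hφbot _)).symm⟩
    rwa [hγ, hr, (EReal.addLECancellable_coe r).add_le_add_iff_left, EReal.coe_le_coe_iff] at hZ
  obtain ⟨a, haX, y, hy⟩ := 𝔖.exists_mem_AX_neg_eq_Λ hcl (hΨ X) hfibre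
  have hgrad : HasGradientAt (Ψ ∘ 𝔖.Λ a) (-y) (𝔖.γ X) :=
    HasGradientAt.comp_linearIsometry _ (by rw [map_neg, ← hy, neg_neg, ← haX]; exact hΨ X)
  have hy_mem := neg_mem_fSubdiff_of_eventually_le_add hdom (hφbot _)
    (𝔖.eventually_le_add_comp_Λ hφ haX hmin) hgrad
  exact ⟨y, by rwa [neg_neg] at hy_mem, a, haX, hy⟩

/-- Commutation principle: if `φ : 𝒳 → (-∞, +∞]` is proper and `S`-invariant,
`Ψ : H → ℝ` is Fréchet differentiable with gradient `Ψ'`, `γ(X) ∈ dom φ`, and `X` is a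
local minimizer of `φ ∘ γ + Ψ`, then `-∇Ψ(X) = Λ_a y` for some `y ∈ ∂_F φ(γ(X))` and
some `a ∈ A_X`. -/
theorem commutation_principle
    [FiniteDimensional ℝ 𝒳] [FiniteDimensional ℝ H]
    (𝔖 : SDS 𝒳 H S A) (hcl : IsClosed 𝔖.LambdaSet)
    (φ : 𝒳 → EReal) (hφbot : ∀ x : 𝒳, φ x ≠ ⊥) (hφproper : ∃ x : 𝒳, φ x ≠ ⊤)
    (hφ : ∀ (s : S) (x : 𝒳), φ (𝔖.act s x) = φ x)
    (Ψ : H → ℝ) (Ψ' : H → H) (hΨ : ∀ Z : H, HasGradientAt Ψ (Ψ' Z) Z)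
    (X : H) (hdom : φ (𝔖.γ X) ≠ ⊤)
    (hmin : ∃ δ : ℝ, 0 < δ ∧ ∀ Z : H, ‖Z - X‖ < δ →
      φ (𝔖.γ X) + (Ψ X : EReal) ≤ φ (𝔖.γ Z) + (Ψ Z : EReal)) :
    ∃ y ∈ fSubdiff φ (𝔖.γ X), ∃ a ∈ 𝔖.AX X, -Ψ' X = 𝔖.Λ a y :=
  commutation_principle_general 𝔖 hcl φ hφbot hφ Ψ Ψ' hΨ X hdom hmin
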